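/- arXiv:2402.10252 — 3 statements merged into one kernel-verified Lean document; each statement's English description precedes it below -/
import Mathlib

section
/- Let K be a gain matrix, A_K := A − BK, and for t, h, i ∈ ℤ_{≥0} with h ≤ t and i ≤ H + h define the disturbance-state transfer matrix Ψ_{t,i}^{K,h}(M_{t−h:t}) := A_K^i 1_{i≤h} + Σ_{j=0}^{h} A_K^j B M_{t−j}^[i−j−1] 1_{i−j ∈ [1,H]}. Then the state sequence {x_t} of the system x_{t+1} = A x_t + B u_t + w_t (with x_0 = 0) under the disturbance-action policies u_s = −K x_s + Σ_{i=1}^H M_s^[i−1] w_{s−i} for s = 0,…,T−1 satisfies, for every h ≤ t − 1, x_t = A_K^{h+1} x_{t−1−h} + Σ_{i=0}^{H+h} Ψ_{t−1,i}^{K,h}(M_{t−1−h:t−1}) w_{t−1−i}. -/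
open MeasureTheory Finset ProbabilityTheory

noncomputable section

namespace OnlineControl

abbrev Vec (n : ℕ) := EuclideanSpace ℝ (Fin n)
abbrev Mat (m n : ℕ) := Matrix (Fin m) (Fin n) ℝ
abbrev Param (H nu nx : ℕ) := EuclideanSpace ℝ (Fin H × Fin nu × Fin nx)

/-- A matrix acting on Euclidean vectors. -/
def mulVecE {m n : ℕ} (A : Mat m n) (v : Vec n) : Vec m := Matrix.toEuclideanLin A v

/-- Spectral norm (ℓ²-operator norm) of a real matrix. -/
def spec {m n : ℕ} (A : Mat m n) : ℝ :=
  ‖LinearMap.toContinuousLinearMap (Matrix.toEuclideanLin A)‖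

/-- Spectral norm (ℓ²-operator norm) of a complex matrix. -/
def specC {m n : ℕ} (A : Matrix (Fin m) (Fin n) ℂ) : ℝ :=
  ‖LinearMap.toContinuousLinearMap (Matrix.toEuclideanLin A)‖

/-- `(κ,γ)`-strong stability of a gain `K` for the system `(A, B)`. -/
def StronglyStable {nx nu : ℕ} (A : Mat nx nx) (B : Mat nx nu) (κ γ : ℝ)
    (K : Mat nu nx) : Prop :=
  ∃ P Q : Matrix (Fin nx) (Fin nx) ℂ,
    IsUnit Q ∧ (A - B * K).map (fun a => (a : ℂ)) = Q * P * Q⁻¹ ∧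
    specC P ≤ 1 - γ ∧ spec K ≤ κ ∧ specC Q ≤ κ ∧ specC Q⁻¹ ≤ κ

/-- `(κ,γ)`-diagonal strong stability. -/
def DiagStronglyStable {nx nu : ℕ} (A : Mat nx nx) (B : Mat nx nu) (κ γ : ℝ)
    (K : Mat nu nx) : Prop :=
  ∃ (d : Fin nx → ℂ) (Q : Matrix (Fin nx) (Fin nx) ℂ),
    IsUnit Q ∧ (A - B * K).map (fun a => (a : ℂ)) = Q * Matrix.diagonal d * Q⁻¹ ∧
    specC (Matrix.diagonal d) ≤ 1 - γ ∧ spec K ≤ κ ∧ specC Q ≤ κ ∧ specC Q⁻¹ ≤ κ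

/-- The `i`-th block `M^[i]` of a stacked disturbance-action parameter. -/
def blk {H nu nx : ℕ} (M : Param H nu nx) (i : Fin H) : Mat nu nx :=
  Matrix.of fun p q => M (i, p, q)

/-- The admissible set ℳ of disturbance-action policy parameters. -/
def MM (H nu nx : ℕ) (κB κ γ : ℝ) : Set (Param H nu nx) :=
  {M | ∀ i : Fin H, spec (blk M i) ≤ 2 * κB * κ ^ 3 * (1 - γ) ^ (i : ℕ)}

/-- Disturbance-state transfer matrix `Ψ_{t,i}^{K,h}(M_{t-h:t})`. -/
def Psi {nx nu H : ℕ} (A : Mat nx nx) (B : Mat nx nu) (K : Mat nu nx)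
    (M : ℤ → Param H nu nx) (t : ℤ) (i h : ℕ) : Mat nx nx :=
  (if i ≤ h then (A - B * K) ^ i else 0) +
    ∑ j ∈ Finset.range (h + 1),
      if hij : 1 ≤ i - j ∧ i - j ≤ H then
        (A - B * K) ^ j * B * blk (M (t - j)) ⟨i - j - 1, by omega⟩
      else 0

/-- Surrogate state `y_t^K(M_{t-1-H:t-1})`. -/
def ySur {nx nu H : ℕ} (A : Mat nx nx) (B : Mat nx nu) (K : Mat nu nx)
    (M : ℤ → Param H nu nx) (w : ℤ → Vec nx) (t : ℕ) : Vec nx :=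
  ∑ i ∈ Finset.range (2 * H + 1), mulVecE (Psi A B K M ((t : ℤ) - 1) i H) (w ((t : ℤ) - 1 - i))

/-- Surrogate input `v_t^K(M_{t-1-H:t})`. -/
def vSur {nx nu H : ℕ} (A : Mat nx nx) (B : Mat nx nu) (K : Mat nu nx)
    (M : ℤ → Param H nu nx) (w : ℤ → Vec nx) (t : ℕ) : Vec nu :=
  -(mulVecE K (ySur A B K M w t)) +
    ∑ i : Fin H, mulVecE (blk (M (t : ℤ)) i) (w ((t : ℤ) - 1 - (i : ℕ)))

/-- Surrogate cost `F_t(M_{t-1-H:t})`. -/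
def Fcost {nx nu H : ℕ} (c : ℕ → Vec nx → Vec nu → ℝ) (A : Mat nx nx) (B : Mat nx nu)
    (K : Mat nu nx) (M : ℤ → Param H nu nx) (w : ℤ → Vec nx) (t : ℕ) : ℝ :=
  c t (ySur A B K M w t) (vSur A B K M w t)

/-- `f_t(M) := F_t(M,…,M)`, as a function of the stacked parameter `M`. -/
def fcost {nx nu H : ℕ} (c : ℕ → Vec nx → Vec nu → ℝ) (A : Mat nx nx) (B : Mat nx nu)
    (K : Mat nu nx) (w : ℤ → Vec nx) (t : ℕ) : Param H nu nx → ℝ :=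
  fun M => Fcost c A B K (fun _ => M) w t

/-- The control input chosen by the disturbance-action policy `π_t(K, M_t)` at state `x`. -/
def dapCtrl {nx nu H : ℕ} (K : Mat nu nx) (M : ℤ → Param H nu nx) (w : ℤ → Vec nx)
    (t : ℕ) (x : Vec nx) : Vec nu :=
  -(mulVecE K x) + ∑ i : Fin H, mulVecE (blk (M (t : ℤ)) i) (w ((t : ℤ) - 1 - (i : ℕ)))

/-- The state trajectory generated by the disturbance-action policies from `x₀ = 0`. -/
def dapState {nx nu H : ℕ} (A : Mat nx nx) (B : Mat nx nu) (K : Mat nu nx)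
    (M : ℤ → Param H nu nx) (w : ℤ → Vec nx) : ℕ → Vec nx
  | 0 => 0
  | t + 1 =>
      mulVecE A (dapState A B K M w t) +
        mulVecE B (dapCtrl K M w t (dapState A B K M w t)) + w (t : ℤ)

/-- The input trajectory generated by the disturbance-action policies. -/
def dapInput {nx nu H : ℕ} (A : Mat nx nx) (B : Mat nx nu) (K : Mat nu nx)
    (M : ℤ → Param H nu nx) (w : ℤ → Vec nx) (t : ℕ) : Vec nu :=
  dapCtrl K M w t (dapState A B K M w t)

/-- The closed-loop state trajectory under the linear feedback `u_t = -K x_t` from `x₀ = 0`. -/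
def cls {nx nu : ℕ} (A : Mat nx nx) (B : Mat nx nu) (K : Mat nu nx)
    (w : ℤ → Vec nx) : ℕ → Vec nx
  | 0 => 0
  | t + 1 => mulVecE (A - B * K) (cls A B K w t) + w (t : ℤ)

/-- Frobenius norm of the Hessian of `f` at `x`, via second directional derivatives along
coordinate directions. -/
def hessFrob {ι : Type} [Fintype ι] [DecidableEq ι] (f : EuclideanSpace ℝ ι → ℝ)
    (x : EuclideanSpace ℝ ι) : ℝ :=
  Real.sqrt (∑ a, ∑ b,
    (iteratedFDeriv ℝ 2 f x ![EuclideanSpace.single a 1, EuclideanSpace.single b 1]) ^ 2)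

/-- Assumption 1: the costs are convex and differentiable with gradients bounded as
`‖∇_x c_t(x,u)‖ ≤ G_c ‖x‖`, `‖∇_u c_t(x,u)‖ ≤ G_c ‖u‖`, for `t ∈ ⟦0, T-1⟧`. -/
def Assumption1 {nx nu : ℕ} (c : ℕ → Vec nx → Vec nu → ℝ) (Gc : ℝ) (T : ℕ) : Prop :=
  1 ≤ Gc ∧ ∀ t < T,
    ConvexOn ℝ Set.univ (fun p : Vec nx × Vec nu => c t p.1 p.2) ∧
    Differentiable ℝ (fun p : Vec nx × Vec nu => c t p.1 p.2) ∧
    ∀ (x : Vec nx) (u : Vec nu),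
      ‖gradient (fun x' => c t x' u) x‖ ≤ Gc * ‖x‖ ∧
      ‖gradient (fun u' => c t x u') u‖ ≤ Gc * ‖u‖

/-- Assumption 2-(i): `E[‖w_t‖] ≤ σ_w` for all `t ≥ 0`. -/
def NoiseMoment1 {Ω : Type} [MeasurableSpace Ω] (μ : Measure Ω) {nx : ℕ}
    (w : ℤ → Ω → Vec nx) (σw : ℝ) : Prop :=
  0 ≤ σw ∧ ∀ t : ℤ, 0 ≤ t → (∫⁻ ω, (‖w t ω‖₊ : ENNReal) ∂μ) ≤ ENNReal.ofReal σw

/-- Assumption 2-(ii): `E[‖w_t‖⁴] ≤ σ_w⁴` for all `t ≥ 0`. -/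
def NoiseMoment4 {Ω : Type} [MeasurableSpace Ω] (μ : Measure Ω) {nx : ℕ}
    (w : ℤ → Ω → Vec nx) (σw : ℝ) : Prop :=
  0 ≤ σw ∧ ∀ t : ℤ, 0 ≤ t → (∫⁻ ω, (‖w t ω‖₊ : ENNReal) ^ 4 ∂μ) ≤ ENNReal.ofReal (σw ^ 4)

/-- Assumption 3: the costs are twice differentiable with `α I ⪯ ∇² c_t ⪯ β I`
for `t ∈ ⟦0, T-1⟧`. -/
def Assumption3 {nx nu : ℕ} (c : ℕ → Vec nx → Vec nu → ℝ) (α β : ℝ) (T : ℕ) : Prop :=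
  0 < α ∧ 0 < β ∧ ∀ t < T,
    ContDiff ℝ 2 (fun p : Vec nx × Vec nu => c t p.1 p.2) ∧
    ∀ (x : Vec nx) (u : Vec nu) (v : Vec nx × Vec nu),
      α * (‖v.1‖ ^ 2 + ‖v.2‖ ^ 2) ≤
          iteratedFDeriv ℝ 2 (fun p : Vec nx × Vec nu => c t p.1 p.2) (x, u) ![v, v] ∧
      iteratedFDeriv ℝ 2 (fun p : Vec nx × Vec nu => c t p.1 p.2) (x, u) ![v, v] ≤
          β * (‖v.1‖ ^ 2 + ‖v.2‖ ^ 2)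

/-- Assumption 4: `{w_t}_{t≥0}` is independent, zero-mean, coordinatewise `σ_w`-sub-Gaussian,
and non-degenerate: `E[w_t w_tᵀ] ⪰ σ̲² I`. -/
def Assumption4 {Ω : Type} [MeasurableSpace Ω] (μ : Measure Ω) {nx : ℕ}
    (w : ℤ → Ω → Vec nx) (σw σl : ℝ) : Prop :=
  0 ≤ σw ∧
  iIndepFun (fun t : ℕ => w t) μ ∧
  (∀ t : ℤ, 0 ≤ t → Integrable (w t) μ ∧ (∫ ω, w t ω ∂μ) = 0) ∧
  (∀ t : ℤ, 0 ≤ t → ∀ i : Fin nx, ∀ l : ℝ,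
    (∫⁻ ω, ENNReal.ofReal (Real.exp (l * w t ω i)) ∂μ) ≤
      ENNReal.ofReal (Real.exp (l ^ 2 * σw ^ 2 / (2 * nx)))) ∧
  0 < σl ∧
  (∀ t : ℤ, 0 ≤ t → ∀ v : Vec nx,
    ENNReal.ofReal (σl ^ 2 * ‖v‖ ^ 2) ≤
      ∫⁻ ω, ENNReal.ofReal ((inner ℝ (w t ω) v : ℝ) ^ 2) ∂μ)

end OnlineControl

open OnlineControl

/-!
Substituting the policy into the dynamics gives the one-step identity
`x_{s+1} = A_K x_s + ∑_{i ≤ H} Ψ_{s,i}^{K,0} w_{s-i}`. Unrolling it by induction on `h`, the only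
new contribution at step `h + 1` is `A_K^{h+1}` applied to the one-step expansion of
`x_{t-1-h}`, and this is exactly what `Ψ^{K,h+1}` adds to `Ψ^{K,h}` (`Psi_succ_right`).
-/

section MulVecE

variable {m n k : ℕ}

theorem mulVecE_mulVecE (X : Mat m n) (Y : Mat n k) (v : Vec k) :
    mulVecE X (mulVecE Y v) = mulVecE (X * Y) v := by
  simp [mulVecE, Matrix.toLpLin_apply]

theorem one_mulVecE (v : Vec n) : mulVecE 1 v = v := by
  simp [mulVecE]

theorem zero_mulVecE (v : Vec n) : mulVecE (0 : Mat m n) v = 0 := by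
  simp [mulVecE]

theorem add_mulVecE (X Y : Mat m n) (v : Vec n) :
    mulVecE (X + Y) v = mulVecE X v + mulVecE Y v := by
  simp [mulVecE]

theorem sub_mulVecE (X Y : Mat m n) (v : Vec n) :
    mulVecE (X - Y) v = mulVecE X v - mulVecE Y v := by
  simp [mulVecE]

theorem mulVecE_add (X : Mat m n) (v v' : Vec n) :
    mulVecE X (v + v') = mulVecE X v + mulVecE X v' := by
  simp [mulVecE]

theorem mulVecE_neg (X : Mat m n) (v : Vec n) : mulVecE X (-v) = -mulVecE X v := by
  simp [mulVecE]

theorem mulVecE_sum (X : Mat m n) {ι : Type*} (s : Finset ι) (f : ι → Vec n) :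
    mulVecE X (∑ i ∈ s, f i) = ∑ i ∈ s, mulVecE X (f i) := by
  simp [mulVecE]

end MulVecE

section Psi

variable {nx nu H : ℕ} (A : Mat nx nx) (B : Mat nx nu) (K : Mat nu nx)
  (M : ℤ → Param H nu nx) (w : ℤ → Vec nx)

theorem Psi_zero_right (τ : ℤ) (i : ℕ) :
    Psi A B K M τ i 0 = (if i = 0 then 1 else 0) +
      if hi : 1 ≤ i ∧ i ≤ H then B * blk (M τ) ⟨i - 1, by omega⟩ else 0 := by
  rcases Nat.eq_zero_or_pos i with rfl | hi
  · simp [Psi]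
  · simp [Psi, hi.ne', Nat.le_zero.not.mpr hi.ne']

theorem Psi_eq_zero_of_lt {τ : ℤ} {i h : ℕ} (hi : H + h < i) : Psi A B K M τ i h = 0 := by
  rw [Psi, if_neg (by omega), zero_add]
  exact Finset.sum_eq_zero fun j hj => dif_neg (by simp at hj; omega)

theorem Psi_succ_right (τ : ℤ) (i h : ℕ) :
    Psi A B K M τ i (h + 1) = Psi A B K M τ i h +
      if h + 1 ≤ i then
        (A - B * K) ^ (h + 1) * Psi A B K M (τ - (h + 1 : ℕ)) (i - (h + 1)) 0
      else 0 := by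
  rw [Psi_zero_right]
  unfold Psi
  rw [Finset.sum_range_succ]
  obtain rfl | hi := eq_or_ne i (h + 1)
  · split_ifs <;> first | omega | simp [add_comm]
  · split_ifs <;> first | omega | simp_all [Matrix.mul_assoc]

theorem Psi_zero_zero (τ : ℤ) : Psi A B K M τ 0 0 = 1 := by
  simp [Psi_zero_right]

theorem Psi_succ_zero (τ : ℤ) (i : Fin H) : Psi A B K M τ (i + 1) 0 = B * blk (M τ) i := by
  simp [Psi_zero_right]

theorem sum_Psi_succ_right (τ : ℤ) (h : ℕ) :
    ∑ i ∈ range (H + (h + 1) + 1), mulVecE (Psi A B K M τ i (h + 1)) (w (τ - i)) =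
      ∑ i ∈ range (H + h + 1), mulVecE (Psi A B K M τ i h) (w (τ - i)) +
        mulVecE ((A - B * K) ^ (h + 1))
          (∑ k ∈ range (H + 1),
            mulVecE (Psi A B K M (τ - (h + 1 : ℕ)) k 0) (w (τ - (h + 1 : ℕ) - k))) := by
  simp only [Psi_succ_right, add_mulVecE, sum_add_distrib]
  congr 1
  · rw [show H + (h + 1) + 1 = H + h + 1 + 1 by ring, sum_range_succ,
      Psi_eq_zero_of_lt _ _ _ _ (by omega), zero_mulVecE, add_zero]
  · rw [mulVecE_sum, show H + (h + 1) + 1 = h + 1 + (H + 1) by ring, sum_range_add,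
      sum_eq_zero fun i hi => by rw [if_neg (by simp at hi; omega), zero_mulVecE], zero_add]
    refine sum_congr rfl fun k _ => ?_
    rw [if_pos (by omega), mulVecE_mulVecE, Nat.add_sub_cancel_left]
    congr 2
    push_cast
    ring

end Psi

section DapState

variable {nx nu H : ℕ} (A : Mat nx nx) (B : Mat nx nu) (K : Mat nu nx)
  (M : ℤ → Param H nu nx) (w : ℤ → Vec nx)

theorem dapState_succ (t : ℕ) :
    dapState A B K M w (t + 1) = mulVecE (A - B * K) (dapState A B K M w t) +
      ∑ i ∈ range (H + 1), mulVecE (Psi A B K M t i 0) (w (t - i)) := by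
  have hfeedthrough : ∀ i : Fin H,
      mulVecE (Psi A B K M t (i + 1) 0) (w (t - (i + 1 : ℕ))) =
        mulVecE B (mulVecE (blk (M t) i) (w (t - 1 - i))) := by
    intro i
    rw [Psi_succ_zero, mulVecE_mulVecE]
    congr 2
    push_cast
    ring
  rw [sum_range_succ', sum_range fun i => mulVecE (Psi A B K M t (i + 1) 0) (w (t - (i + 1 : ℕ))),
    sum_congr rfl fun i _ => hfeedthrough i, Psi_zero_zero, one_mulVecE, ← mulVecE_sum]
  simp only [dapState, dapCtrl, mulVecE_add, mulVecE_neg, sub_mulVecE, mulVecE_mulVecE]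
  abel

theorem dapState_add_succ (s h : ℕ) :
    dapState A B K M w (s + (h + 1)) =
      mulVecE ((A - B * K) ^ (h + 1)) (dapState A B K M w s) +
        ∑ i ∈ range (H + h + 1), mulVecE (Psi A B K M (s + h : ℕ) i h) (w ((s + h : ℕ) - i)) := by
  induction h generalizing s with
  | zero => simpa using dapState_succ A B K M w s
  | succ h ih =>
    have hτ : ((s + (h + 1) : ℕ) : ℤ) - (h + 1 : ℕ) = s := by push_cast; ring
    rw [show s + (h + 1 + 1) = s + 1 + (h + 1) by ring, ih, dapState_succ, mulVecE_add,
      mulVecE_mulVecE, ← pow_succ, show s + 1 + h = s + (h + 1) by ring, sum_Psi_succ_right, hτ]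
    abel

end DapState

theorem state_evolution_disturbance_action_general
    {nx nu H : ℕ} (A : Mat nx nx) (B : Mat nx nu) (K : Mat nu nx)
    (M : ℤ → Param H nu nx) (w : ℤ → Vec nx) :
    ∀ t h : ℕ, h + 1 ≤ t →
      dapState A B K M w t =
        mulVecE ((A - B * K) ^ (h + 1)) (dapState A B K M w (t - 1 - h)) +
          ∑ i ∈ Finset.range (H + h + 1),
            mulVecE (Psi A B K M ((t : ℤ) - 1) i h) (w ((t : ℤ) - 1 - i)) := by
  intro t h ht
  obtain ⟨s, rfl⟩ : ∃ s, t = s + (h + 1) := ⟨t - (h + 1), by omega⟩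
  have hτ : ((s + (h + 1) : ℕ) : ℤ) - 1 = (s + h : ℕ) := by push_cast; ring
  rw [show s + (h + 1) - 1 - h = s by omega, hτ]
  exact dapState_add_succ A B K M w s h

/-- Proposition 1: evolution of the state under disturbance-action
policies in terms of the disturbance-state transfer matrices. -/
theorem state_evolution_disturbance_action
    {nx nu H : ℕ} (A : Mat nx nx) (B : Mat nx nu) (K : Mat nu nx)
    (M : ℤ → Param H nu nx) (w : ℤ → Vec nx)
    (hw0 : ∀ s : ℤ, s < 0 → w s = 0) :
    ∀ t h : ℕ, h + 1 ≤ t →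
      dapState A B K M w t =
        mulVecE ((A - B * K) ^ (h + 1)) (dapState A B K M w (t - 1 - h)) +
          ∑ i ∈ Finset.range (H + h + 1),
            mulVecE (Psi A B K M ((t : ℤ) - 1) i h) (w ((t : ℤ) - 1 - i)) :=
  state_evolution_disturbance_action_general A B K M w
end
end

section
/- Let K be (κ,γ)-strongly stable and suppose M_t ∈ ℳ for all t ∈ ℤ_{≥0}. Then for any h, i ∈ ℤ_{≥0} and any t ≥ h, the disturbance-state transfer matrix satisfies ‖Ψ_{t,i}^{K,h}(M_{t−h:t})‖ ≤ κ²(1−γ)^i 1_{i≤h} + 2H κ_B² κ⁵ (1−γ)^{i−1}; in particular ‖Ψ_{t,i}^{K,h}(M_{t−h:t})‖ ≤ (2H+1) κ_B² κ⁵ (1−γ)^{i−1}. -/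
open MeasureTheory Finset ProbabilityTheory

noncomputable section

open OnlineControl

/-! Strong stability writes `A - B K = Q P Q⁻¹` over `ℂ`, so `‖(A - B K)^i‖ ≤ ‖Q‖ ‖P‖^i ‖Q⁻¹‖ ≤
κ² (1-γ)^i`; complexifying a real matrix does not decrease its spectral norm. Each summand
`(A - B K)^j B M^[i-j-1]` of `Ψ` is then at most `κ²(1-γ)^j · κ_B · 2κ_Bκ³(1-γ)^(i-j-1) =
2κ_B²κ⁵(1-γ)^(i-1)`, and at most `H` indices `j` have `i - j ∈ [1, H]`. -/

open scoped Matrix Matrix.Norms.L2Operator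

lemma EuclideanSpace.norm_toLp_ofReal {n : Type*} [Fintype n] (w : n → ℝ) :
    ‖WithLp.toLp 2 (fun k => (w k : ℂ))‖ = ‖WithLp.toLp 2 w‖ := by
  simp only [EuclideanSpace.norm_eq, Complex.norm_real]

lemma Matrix.l2_opNorm_le_map_ofReal {m n : Type*} [Fintype m] [Fintype n] [DecidableEq n]
    (A : Matrix m n ℝ) : ‖A‖ ≤ ‖A.map (fun a => (a : ℂ))‖ := by
  rw [Matrix.l2_opNorm_def]
  refine ContinuousLinearMap.opNorm_le_bound _ (norm_nonneg _) fun v => ?_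
  have hmulVec : A.map (fun a => (a : ℂ)) *ᵥ (fun k => (v k : ℂ)) = fun k => ((A *ᵥ v) k : ℂ) :=
    funext fun k => (RingHom.map_mulVec Complex.ofRealHom A v k).symm
  calc ‖WithLp.toLp 2 (A *ᵥ v.ofLp)‖
      = ‖WithLp.toLp 2 (A.map (fun a => (a : ℂ)) *ᵥ (fun k => (v k : ℂ)))‖ := by
        rw [hmulVec, EuclideanSpace.norm_toLp_ofReal]
    _ = ‖(EuclideanSpace.equiv m ℂ).symm
          (A.map (fun a => (a : ℂ)) *ᵥ (WithLp.toLp 2 fun k => (v k : ℂ)))‖ := rfl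
    _ ≤ ‖A.map (fun a => (a : ℂ))‖ * ‖WithLp.toLp 2 (fun k => (v k : ℂ))‖ :=
        Matrix.l2_opNorm_mulVec (A.map fun a => (a : ℂ)) (WithLp.toLp 2 fun k => (v k : ℂ))
    _ = ‖A.map (fun a => (a : ℂ))‖ * ‖v‖ := by
        rw [EuclideanSpace.norm_toLp_ofReal, WithLp.toLp_ofLp]

lemma norm_units_conj_pow_le {R : Type*} [NormedRing R] (u : Rˣ) (P : R) (i : ℕ) :
    ‖((u : R) * P * ↑u⁻¹) ^ i‖ ≤ ‖(u : R)‖ * ‖P‖ ^ i * ‖(↑u⁻¹ : R)‖ := by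
  rw [Units.conj_pow]
  rcases i with _ | i
  · simpa using norm_mul_le (u : R) ↑u⁻¹
  · refine norm_mul₃_le.trans ?_
    gcongr
    exact norm_pow_le' P i.succ_pos

lemma Finset.card_filter_sub_mem_Icc_le (s : Finset ℕ) (i H : ℕ) :
    #{j ∈ s | 1 ≤ i - j ∧ i - j ≤ H} ≤ H := by
  calc #{j ∈ s | 1 ≤ i - j ∧ i - j ≤ H}
      ≤ #(Ico (i - H) i) := card_le_card fun j hj => by
        simp only [mem_filter, mem_Ico] at hj ⊢; omega
    _ ≤ H := by rw [Nat.card_Ico]; omega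

namespace OnlineControl

lemma spec_nonneg {m n : ℕ} (A : Mat m n) : 0 ≤ spec A := norm_nonneg A

lemma spec_zero {m n : ℕ} : spec (0 : Mat m n) = 0 := norm_zero (E := Mat m n)

lemma spec_add_le {m n : ℕ} (X Y : Mat m n) : spec (X + Y) ≤ spec X + spec Y := norm_add_le X Y

lemma spec_sum_le {m n : ℕ} {ι : Type*} (s : Finset ι) (f : ι → Mat m n) :
    spec (∑ j ∈ s, f j) ≤ ∑ j ∈ s, spec (f j) := norm_sum_le s f

lemma spec_mul_le {m n l : ℕ} (X : Mat m n) (Y : Mat n l) : spec (X * Y) ≤ spec X * spec Y :=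
  Matrix.l2_opNorm_mul X Y

variable {nx nu H : ℕ} {A : Mat nx nx} {B : Mat nx nu} {κ γ κB : ℝ} {K : Mat nu nx}

lemma StronglyStable.nonneg (hK : StronglyStable A B κ γ K) : 0 ≤ κ := by
  obtain ⟨-, -, -, -, -, hκ, -⟩ := hK
  exact (spec_nonneg K).trans hκ

lemma StronglyStable.one_sub_nonneg (hK : StronglyStable A B κ γ K) : 0 ≤ 1 - γ := by
  obtain ⟨P, -, -, -, hP, -⟩ := hK
  exact (norm_nonneg P).trans hP

lemma StronglyStable.spec_pow_le (hK : StronglyStable A B κ γ K) (i : ℕ) :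
    spec ((A - B * K) ^ i) ≤ κ ^ 2 * (1 - γ) ^ i := by
  have hκ := hK.nonneg
  have hγ := hK.one_sub_nonneg
  obtain ⟨P, _, ⟨u, rfl⟩, hfac, hP, -, hQ, hQinv⟩ := hK
  rw [← Matrix.coe_units_inv] at hfac hQinv
  have hpow : ((A - B * K) ^ i).map (fun a => (a : ℂ)) = ((A - B * K).map fun a => (a : ℂ)) ^ i :=
    Matrix.map_pow _ Complex.ofRealHom i
  calc spec ((A - B * K) ^ i)
      ≤ ‖((A - B * K).map (fun a => (a : ℂ))) ^ i‖ := hpow ▸ Matrix.l2_opNorm_le_map_ofReal _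
    _ ≤ ‖(u : Matrix (Fin nx) (Fin nx) ℂ)‖ * ‖P‖ ^ i * ‖(↑u⁻¹ : Matrix (Fin nx) (Fin nx) ℂ)‖ := by
        rw [hfac]; exact norm_units_conj_pow_le u P i
    _ ≤ κ * (1 - γ) ^ i * κ := by
        have : ‖P‖ ≤ 1 - γ := hP
        gcongr
        exacts [hQ, hQinv]
    _ = κ ^ 2 * (1 - γ) ^ i := by ring

lemma StronglyStable.spec_pow_mul_mul_blk_le (hK : StronglyStable A B κ γ K)
    (hB : spec B ≤ κB) {N : Param H nu nx} (hN : N ∈ MM H nu nx κB κ γ) (j : ℕ) (k : Fin H) :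
    spec ((A - B * K) ^ j * B * blk N k) ≤ 2 * κB ^ 2 * κ ^ 5 * (1 - γ) ^ (j + k) := by
  have := hK.nonneg
  have := hK.one_sub_nonneg
  have := (spec_nonneg B).trans hB
  calc spec ((A - B * K) ^ j * B * blk N k)
      ≤ spec ((A - B * K) ^ j) * spec B * spec (blk N k) :=
        (spec_mul_le _ _).trans (by gcongr; exacts [spec_nonneg _, spec_mul_le _ _])
    _ ≤ κ ^ 2 * (1 - γ) ^ j * κB * (2 * κB * κ ^ 3 * (1 - γ) ^ (k : ℕ)) := by
        gcongr
        exacts [spec_nonneg _, spec_nonneg _, hK.spec_pow_le j, hN k]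
    _ = 2 * κB ^ 2 * κ ^ 5 * (1 - γ) ^ (j + k) := by ring

lemma spec_Psi_le (hK : StronglyStable A B κ γ K) (hB : spec B ≤ κB) (M : ℤ → Param H nu nx)
    (t : ℤ) (i h : ℕ) (hM : ∀ j ≤ h, M (t - j) ∈ MM H nu nx κB κ γ) :
    spec (Psi A B K M t i h) ≤
      (if i ≤ h then κ ^ 2 * (1 - γ) ^ i else 0) +
        2 * H * κB ^ 2 * κ ^ 5 * (1 - γ) ^ ((i : ℤ) - 1) := by
  set C := 2 * κB ^ 2 * κ ^ 5 * (1 - γ) ^ ((i : ℤ) - 1) with hC_def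
  have hC : 0 ≤ C := by
    have := hK.nonneg
    have := hK.one_sub_nonneg
    positivity
  refine (spec_add_le _ _).trans (add_le_add ?_ ?_)
  · split_ifs
    exacts [hK.spec_pow_le i, spec_zero.le]
  calc _ ≤ ∑ j ∈ range (h + 1), if 1 ≤ i - j ∧ i - j ≤ H then C else 0 := by
        refine (spec_sum_le _ _).trans (sum_le_sum fun j hj => ?_)
        split_ifs with hij
        · refine (hK.spec_pow_mul_mul_blk_le hB (hM j (by simpa [Nat.lt_succ_iff] using hj)) j
            _).trans_eq ?_
          have hexp : ((j + (i - j - 1) : ℕ) : ℤ) = (i : ℤ) - 1 := by omega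
          rw [hC_def, ← hexp, zpow_natCast]
        · exact spec_zero.le
    _ = #{j ∈ range (h + 1) | 1 ≤ i - j ∧ i - j ≤ H} * C := by
        rw [sum_ite, sum_const_zero, add_zero, sum_const, nsmul_eq_mul]
    _ ≤ H * C := by gcongr; exact_mod_cast card_filter_sub_mem_Icc_le _ i H
    _ = 2 * H * κB ^ 2 * κ ^ 5 * (1 - γ) ^ ((i : ℤ) - 1) := by ring

end OnlineControl

/-- bound on the disturbance-state transfer matrix for admissible policy
parameters. -/
theorem psi_norm_bound
    {nx nu H : ℕ} (A : Mat nx nx) (B : Mat nx nu) (κ γ κB : ℝ) (K : Mat nu nx)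
    (M : ℤ → Param H nu nx)
    (hκ : 1 ≤ κ) (hγ0 : 0 < γ) (hγ1 : γ < 1) (hκB : κB = max (spec B) 1)
    (hK : StronglyStable A B κ γ K)
    (hM : ∀ s : ℤ, 0 ≤ s → M s ∈ MM H nu nx κB κ γ) :
    ∀ (h i : ℕ) (t : ℤ), (h : ℤ) ≤ t →
      spec (Psi A B K M t i h) ≤
        (if i ≤ h then κ ^ 2 * (1 - γ) ^ i else 0) +
          2 * H * κB ^ 2 * κ ^ 5 * (1 - γ) ^ ((i : ℤ) - 1) ∧
      spec (Psi A B K M t i h) ≤ (2 * H + 1) * κB ^ 2 * κ ^ 5 * (1 - γ) ^ ((i : ℤ) - 1) := by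
  intro h i t ht
  have hB : spec B ≤ κB := hκB ▸ le_max_left _ _
  have hκB1 : 1 ≤ κB := hκB ▸ le_max_right _ _
  have hPsi := spec_Psi_le hK hB M t i h fun j hj => hM _ (by omega)
  refine ⟨hPsi, hPsi.trans ?_⟩
  have hfirst : (if i ≤ h then κ ^ 2 * (1 - γ) ^ i else 0) ≤
      κB ^ 2 * κ ^ 5 * (1 - γ) ^ ((i : ℤ) - 1) := by
    have hzpow : (1 - γ) ^ i ≤ (1 - γ) ^ ((i : ℤ) - 1) := by
      rw [← zpow_natCast]
      exact zpow_le_zpow_right_of_le_one₀ (by linarith) (by linarith) (by omega)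
    have hκpow : κ ^ 2 ≤ κB ^ 2 * κ ^ 5 :=
      calc κ ^ 2 ≤ κ ^ 5 := pow_le_pow_right₀ hκ (by norm_num)
        _ ≤ κB ^ 2 * κ ^ 5 := le_mul_of_one_le_left (by positivity) (one_le_pow₀ hκB1)
    split_ifs
    · gcongr
    · have : 0 < 1 - γ := by linarith
      positivity
  linarith
end
end

section
/- Let K and K* be gain matrices and define M_* by M_*^[i] := (K − K*)(A − BK*)^i for i ∈ [0, H−1]. Let x_t^K(M_*), u_t^K(M_*) be the state and input under the disturbance-action policy u_t = −K x_t + Σ_{i=1}^H M_*^[i−1] w_{t−i} from x_0 = 0, and let u_t^{K*} = −K* x_t^{K*} be the input under the linear feedback K* from x_0^{K*} = 0, where w_t = 0 for t < 0. Then for every t ∈ [0, H], u_t^K(M_*) = −K* Σ_{i=0}^{t−1} (A − BK*)^i w_{t−1−i} = u_t^{K*}. -/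
open MeasureTheory Finset ProbabilityTheory

noncomputable section

open OnlineControl

/-! Because `w` vanishes before time `0`, for `t ≤ H` the disturbance-action term of `M_*` is
`∑_{i<t} (K - K*)(A - BK*)^i w_{t-1-i} = (K - K*) x_t^{K*}`. So whenever the state equals
`x_t^{K*}`, the policy plays `-K x_t^{K*} + (K - K*) x_t^{K*} = -K* x_t^{K*}`, the input of the
linear feedback `K*`; by induction on `t` the two trajectories coincide up to time `H`. -/

namespace OnlineControl

section MulVecE

variable {m n k : ℕ}

lemma mulVecE_neg (A : Mat m n) (x : Vec n) : mulVecE A (-x) = -mulVecE A x :=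
  map_neg _ x

lemma mulVecE_zero (A : Mat m n) : mulVecE A 0 = 0 :=
  map_zero _

lemma mulVecE_sum (A : Mat m n) {ι : Type*} (s : Finset ι) (f : ι → Vec n) :
    mulVecE A (∑ i ∈ s, f i) = ∑ i ∈ s, mulVecE A (f i) :=
  map_sum _ f s

lemma sub_mulVecE (A B : Mat m n) (v : Vec n) :
    mulVecE (A - B) v = mulVecE A v - mulVecE B v := by
  simp only [mulVecE, map_sub, LinearMap.sub_apply]

lemma one_mulVecE (v : Vec n) : mulVecE (1 : Mat n n) v = v := by
  simp [mulVecE]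

lemma mulVecE_mulVecE (A : Mat m n) (B : Mat n k) (v : Vec k) :
    mulVecE A (mulVecE B v) = mulVecE (A * B) v := by
  simp [mulVecE]

end MulVecE

section DisturbanceAction

variable {nx nu H : ℕ} (A : Mat nx nx) (B : Mat nx nu) (K Kstar : Mat nu nx)
  (w : ℤ → Vec nx) (Mstar : Param H nu nx)

lemma cls_eq_sum (t : ℕ) :
    cls A B K w t = ∑ i ∈ range t, mulVecE ((A - B * K) ^ i) (w ((t : ℤ) - 1 - i)) := by
  induction t with
  | zero => rfl
  | succ t ih =>
    rw [cls, ih, mulVecE_sum, sum_range_succ']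
    congr 1
    · refine sum_congr rfl fun i _ => ?_
      rw [mulVecE_mulVecE, ← pow_succ']
      congr 2
      push_cast
      ring
    · simp [one_mulVecE]

lemma sum_blk_mulVecE_eq_cls (hw0 : ∀ s : ℤ, s < 0 → w s = 0)
    (hMstar : ∀ i : Fin H, blk Mstar i = (K - Kstar) * (A - B * Kstar) ^ (i : ℕ))
    {t : ℕ} (ht : t ≤ H) :
    ∑ i : Fin H, mulVecE (blk Mstar i) (w ((t : ℤ) - 1 - (i : ℕ))) =
      mulVecE (K - Kstar) (cls A B Kstar w t) := by
  have hvanish : ∀ i ∈ range H, i ∉ range t →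
      mulVecE ((K - Kstar) * (A - B * Kstar) ^ i) (w ((t : ℤ) - 1 - i)) = 0 := by
    intro i _ hi
    rw [mem_range, not_lt] at hi
    rw [hw0 _ (by omega), mulVecE_zero]
  simp only [hMstar]
  rw [Fin.sum_univ_eq_sum_range (fun i => mulVecE ((K - Kstar) * (A - B * Kstar) ^ i)
      (w ((t : ℤ) - 1 - i))), ← sum_subset (range_subset_range.mpr ht) hvanish,
    cls_eq_sum, mulVecE_sum]
  simp only [mulVecE_mulVecE]

lemma dapCtrl_cls (hw0 : ∀ s : ℤ, s < 0 → w s = 0)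
    (hMstar : ∀ i : Fin H, blk Mstar i = (K - Kstar) * (A - B * Kstar) ^ (i : ℕ))
    {t : ℕ} (ht : t ≤ H) :
    dapCtrl K (fun _ => Mstar) w t (cls A B Kstar w t) = -mulVecE Kstar (cls A B Kstar w t) := by
  rw [dapCtrl, sum_blk_mulVecE_eq_cls A B K Kstar w Mstar hw0 hMstar ht, sub_mulVecE]
  abel

lemma dapState_eq_cls (hw0 : ∀ s : ℤ, s < 0 → w s = 0)
    (hMstar : ∀ i : Fin H, blk Mstar i = (K - Kstar) * (A - B * Kstar) ^ (i : ℕ))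
    {t : ℕ} (ht : t ≤ H) :
    dapState A B K (fun _ => Mstar) w t = cls A B Kstar w t := by
  induction t with
  | zero => rfl
  | succ t ih =>
    have ht' : t ≤ H := by omega
    rw [dapState, cls, ih ht', dapCtrl_cls A B K Kstar w Mstar hw0 hMstar ht', mulVecE_neg,
      mulVecE_mulVecE, sub_mulVecE, sub_eq_add_neg]

end DisturbanceAction

end OnlineControl

/-- for `t ≤ H`, the disturbance-action policy with parameter `M_*`
reproduces the linear feedback `u_t = -K* x_t`. -/
theorem dap_input_eq_linear_feedback
    {nx nu H : ℕ} (A : Mat nx nx) (B : Mat nx nu) (K Kstar : Mat nu nx)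
    (w : ℤ → Vec nx) (Mstar : Param H nu nx)
    (hw0 : ∀ s : ℤ, s < 0 → w s = 0)
    (hMstar : ∀ i : Fin H, blk Mstar i = (K - Kstar) * (A - B * Kstar) ^ (i : ℕ)) :
    ∀ t : ℕ, t ≤ H →
      dapInput A B K (fun _ => Mstar) w t =
        -(mulVecE Kstar
            (∑ i ∈ Finset.range t, mulVecE ((A - B * Kstar) ^ i) (w ((t : ℤ) - 1 - i)))) ∧
      dapInput A B K (fun _ => Mstar) w t = -(mulVecE Kstar (cls A B Kstar w t)) := by
  intro t ht
  have hu : dapInput A B K (fun _ => Mstar) w t = -(mulVecE Kstar (cls A B Kstar w t)) := by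
    rw [dapInput, dapState_eq_cls A B K Kstar w Mstar hw0 hMstar ht,
      dapCtrl_cls A B K Kstar w Mstar hw0 hMstar ht]
  exact ⟨by rw [hu, cls_eq_sum], hu⟩
end
end
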